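/- arXiv:1710.02416 — 2 statements merged into one kernel-verified Lean document; each statement's English description precedes it below -/
import Mathlib

section
/- Let T be a tree on n vertices and q a real number with |q| ≤ 1. Then the q-Laplacian L^q_T = I + q^2(D - I) - qA is positive semidefinite. -/
noncomputable def qLap {n : ℕ} (G : SimpleGraph (Fin n)) [DecidableRel G.Adj]
    {R : Type*} [CommRing R] (q : R) : Matrix (Fin n) (Fin n) R :=
  Matrix.of fun i j =>
    if i = j then 1 + q ^ 2 * ((G.degree i : R) - 1)
    else if G.Adj i j then -q else 0

/-!
Root the tree at a vertex `r` and let `p v` be the parent of `v ≠ r`. Every edge is `{v, p v}`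
for exactly one `v ≠ r`, and a vertex `u` has `deg u - 1` children (`deg r` if `u = r`).
Counting each `q² x_u²` once for every child of `u` gives the sum-of-squares decomposition
`xᵀ L^q_T x = (1 - q²) x_r² + ∑_{v ≠ r} (x_v - q x_{p v})²`, which is nonnegative as `q² ≤ 1`.
-/

open Finset Matrix

namespace SimpleGraph.IsTree

variable {V : Type*} {G : SimpleGraph V}

noncomputable def walkToRoot (hG : G.IsTree) (r v : V) : G.Walk v r :=
  (hG.connected.exists_walk_length_eq_dist v r).choose

lemma length_walkToRoot (hG : G.IsTree) (r v : V) :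
    (hG.walkToRoot r v).length = G.dist v r :=
  (hG.connected.exists_walk_length_eq_dist v r).choose_spec

/-- Junk value at the root: `hG.parent r r = r`. -/
noncomputable def parent (hG : G.IsTree) (r v : V) : V := (hG.walkToRoot r v).snd

variable {r : V}

lemma adj_parent (hG : G.IsTree) {v : V} (hv : v ≠ r) : G.Adj v (hG.parent r v) :=
  Walk.adj_snd (Walk.not_nil_of_ne hv)

lemma dist_parent_add_one (hG : G.IsTree) {v : V} (hv : v ≠ r) :
    G.dist (hG.parent r v) r + 1 = G.dist v r := by
  have htail : G.dist (hG.parent r v) r ≤ G.dist v r - 1 := by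
    simpa [parent, Walk.length_tail, length_walkToRoot] using dist_le (hG.walkToRoot r v).tail
  have hpos := hG.connected.pos_dist_of_ne hv
  have hstep := hG.dist_eq_dist_add_one_of_adj r (hG.adj_parent hv)
  rw [dist_comm (u := r), dist_comm (u := r)] at hstep
  omega

lemma parent_eq_of_adj (hG : G.IsTree) {v w : V} (h : G.Adj v w)
    (hd : G.dist w r < G.dist v r) : hG.parent r v = w := by
  have hlen : (Walk.cons h (hG.walkToRoot r w)).length = G.dist v r := by
    have hstep := hG.dist_eq_dist_add_one_of_adj r h
    rw [dist_comm (u := r), dist_comm (u := r)] at hstep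
    rw [Walk.length_cons, length_walkToRoot]
    omega
  have hwalk := congrArg Subtype.val <| (hG.isAcyclic.subsingleton_path v r).elim
    ⟨_, (hG.walkToRoot r v).isPath_of_length_eq_dist (hG.length_walkToRoot r v)⟩
    ⟨_, Walk.isPath_of_length_eq_dist _ hlen⟩
  dsimp only at hwalk
  rw [parent, hwalk, Walk.snd_cons]

lemma adj_iff_parent (hG : G.IsTree) {v w : V} :
    G.Adj v w ↔ (v ≠ r ∧ hG.parent r v = w) ∨ (w ≠ r ∧ hG.parent r w = v) := by
  refine ⟨fun h => ?_, ?_⟩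
  · rcases hG.dist_eq_dist_add_one_of_adj r h with hd | hd <;>
      rw [dist_comm (u := r), dist_comm (u := r)] at hd
    · refine .inl ⟨?_, hG.parent_eq_of_adj h (by omega)⟩
      rintro rfl
      simp at hd
    · refine .inr ⟨?_, hG.parent_eq_of_adj h.symm (by omega)⟩
      rintro rfl
      simp at hd
  · rintro (⟨hv, rfl⟩ | ⟨hw, rfl⟩)
    · exact hG.adj_parent hv
    · exact (hG.adj_parent hw).symm

lemma not_parent_eq_and_parent_eq (hG : G.IsTree) {v w : V} (hv : v ≠ r) (hw : w ≠ r) :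
    ¬(hG.parent r v = w ∧ hG.parent r w = v) := by
  rintro ⟨rfl, hwv⟩
  have h1 := hG.dist_parent_add_one hv
  have h2 := hG.dist_parent_add_one hw
  rw [hwv] at h2
  omega

variable [Fintype V] [DecidableEq V] [DecidableRel G.Adj]

lemma sum_sum_neighborFinset (hG : G.IsTree) (r : V) {M : Type*} [AddCommMonoid M]
    (f : V → V → M) :
    ∑ v, ∑ w ∈ G.neighborFinset v, f v w =
      ∑ v ∈ univ.erase r, (f v (hG.parent r v) + f (hG.parent r v) v) := by
  have hsplit : ∀ v w, (if G.Adj v w then f v w else 0) =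
      (if v ≠ r ∧ hG.parent r v = w then f v w else 0) +
        (if w ≠ r ∧ hG.parent r w = v then f v w else 0) := by
    intro v w
    by_cases hv : v ≠ r ∧ hG.parent r v = w
    · have hw : ¬(w ≠ r ∧ hG.parent r w = v) := fun hw =>
        hG.not_parent_eq_and_parent_eq hv.1 hw.1 ⟨hv.2, hw.2⟩
      rw [if_pos (hG.adj_iff_parent.2 (.inl hv)), if_pos hv, if_neg hw, add_zero]
    · by_cases hw : w ≠ r ∧ hG.parent r w = v
      · rw [if_pos (hG.adj_iff_parent.2 (.inr hw)), if_neg hv, if_pos hw, zero_add]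
      · rw [if_neg (by rw [hG.adj_iff_parent (r := r)]; tauto), if_neg hv, if_neg hw, add_zero]
  simp_rw [neighborFinset_eq_filter, sum_filter, hsplit, sum_add_distrib]
  rw [sum_comm (f := fun v w => if w ≠ r ∧ hG.parent r w = v then f v w else 0)]
  simp only [ite_and, sum_ite_irrel, sum_const_zero, Fintype.sum_ite_eq]
  rw [← filter_ne', sum_filter, sum_filter]

end SimpleGraph.IsTree

section qLap

variable {n : ℕ} (G : SimpleGraph (Fin n)) [DecidableRel G.Adj] {R : Type*} [CommRing R] (q : R)

lemma qLap_eq : qLap G q = 1 + q ^ 2 • (G.degMatrix R - 1) - q • G.adjMatrix R := by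
  ext i j
  by_cases h : i = j
  · subst h
    simp [qLap, SimpleGraph.degMatrix]
  · by_cases hA : G.Adj i j <;> simp [qLap, SimpleGraph.degMatrix, h, hA]

lemma isSymm_qLap : (qLap G q).IsSymm := by
  rw [qLap_eq]
  exact (isSymm_one.add (((G.isSymm_degMatrix R).sub isSymm_one).smul _)).sub
    (G.isSymm_adjMatrix.smul _)

lemma qLap_mulVec_apply (x : Fin n → R) (v : Fin n) :
    (qLap G q *ᵥ x) v = x v + q ^ 2 * (G.degree v * x v - x v) -
      q * ∑ w ∈ G.neighborFinset v, x w := by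
  simp only [qLap_eq, sub_mulVec, add_mulVec, smul_mulVec, one_mulVec, Pi.sub_apply, Pi.add_apply,
    Pi.smul_apply, smul_eq_mul, SimpleGraph.degMatrix_mulVec_apply,
    SimpleGraph.adjMatrix_mulVec_apply]

lemma dotProduct_qLap_mulVec (x : Fin n → R) :
    x ⬝ᵥ (qLap G q *ᵥ x) = ∑ v, ((1 - q ^ 2) * x v ^ 2 +
      ∑ w ∈ G.neighborFinset v, (q ^ 2 * x v ^ 2 - q * (x v * x w))) := by
  refine sum_congr rfl fun v _ => ?_
  rw [qLap_mulVec_apply, sum_sub_distrib, sum_const, G.card_neighborFinset_eq_degree, nsmul_eq_mul,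
    ← mul_sum, ← mul_sum]
  ring

lemma dotProduct_qLap_mulVec_of_isTree (hG : G.IsTree) (r : Fin n) (x : Fin n → R) :
    x ⬝ᵥ (qLap G q *ᵥ x) =
      (1 - q ^ 2) * x r ^ 2 + ∑ v ∈ univ.erase r, (x v - q * x (hG.parent r v)) ^ 2 := by
  rw [dotProduct_qLap_mulVec, sum_add_distrib, hG.sum_sum_neighborFinset r,
    ← add_sum_erase _ _ (mem_univ r), add_assoc, ← sum_add_distrib]
  congr 1
  exact sum_congr rfl fun v _ => by ring

end qLap

/-- For a tree `T` and a real `q` with `|q| ≤ 1`, the `q`-Laplacian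
`L^q_T = I + q²(D - I) - qA` is positive semidefinite. -/
theorem qLap_posSemidef {n : ℕ} (G : SimpleGraph (Fin n)) [DecidableRel G.Adj]
    (hG : G.IsTree) (q : ℝ) (hq : |q| ≤ 1) :
    (qLap G q).PosSemidef := by
  obtain ⟨r⟩ := hG.connected.nonempty
  have hq2 : 0 ≤ 1 - q ^ 2 := sub_nonneg.2 ((sq_le_one_iff_abs_le_one q).2 hq)
  refine .of_dotProduct_mulVec_nonneg (isHermitian_iff_isSymm.2 (isSymm_qLap G q)) fun x => ?_
  rw [star_trivial, dotProduct_qLap_mulVec_of_isTree G q hG r]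
  exact add_nonneg (mul_nonneg hq2 (sq_nonneg _)) (sum_nonneg fun v _ => sq_nonneg _)
end

section
/- Let T be a tree on n vertices and B ⊆ [n] with |B| = r. Then for n×n matrices arising from T, only permutations σ ∈ S_n that fix [n]\B pointwise and whose restriction to B consists of fixed points and transpositions along edges of T contribute a nonzero product Π_i (L^q_T)_{i,σ(i)} to the immanant of the matrix obtained from xI - L^q_T; consequently d_λ of the block-diagonal matrix diag(L^q_T[B|B], I_{n-r}) equals Σ_{j=0}^{⌊r/2⌋} χ_λ(j) · Σ_{M ∈ M_j(B)} q^{2j} Π_{v ∈ B\V(M)} (1 + q^2(deg(v)-1)). -/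
open Finset Polynomial

/-- Irreducible character of `Sₙ` indexed by the partition `lam`, via the
Frobenius character formula. -/
noncomputable def chiPart (n : ℕ) (lam : Fin n → ℕ) (σ : Equiv.Perm (Fin n)) : ℤ :=
  MvPolynomial.coeff (Finsupp.equivFunOnFinite.symm fun i => lam i + (n - 1 - (i : ℕ)))
    ((∏ i : Fin n, ∏ j ∈ Finset.univ.filter (fun j => i < j),
        (MvPolynomial.X i - MvPolynomial.X j : MvPolynomial (Fin n) ℤ)) *
      ((σ.cycleType.map fun c =>
          ∑ i : Fin n, (MvPolynomial.X i : MvPolynomial (Fin n) ℤ) ^ c).prod *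
        (∑ i : Fin n, (MvPolynomial.X i : MvPolynomial (Fin n) ℤ)) ^ (n - σ.cycleType.sum)))

noncomputable def imman {n : ℕ} {R : Type*} [CommRing R] (χ : Equiv.Perm (Fin n) → R)
    (A : Matrix (Fin n) (Fin n) R) : R :=
  ∑ σ : Equiv.Perm (Fin n), χ σ * ∏ i, A i (σ i)

open scoped Classical in
/-- `M_j(B)`: the `j`-edge matchings of the forest induced by `G` on `B`. -/
noncomputable def bMatchings {n : ℕ} (G : SimpleGraph (Fin n)) [DecidableRel G.Adj]
    (B : Finset (Fin n)) (j : ℕ) : Finset (Finset (Sym2 (Fin n))) :=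
  G.edgeFinset.powerset.filter fun M =>
    M.card = j ∧ (∀ e ∈ M, ∀ v, v ∈ e → v ∈ B) ∧
      ∀ e ∈ M, ∀ f ∈ M, e ≠ f → ∀ v : Fin n, ¬(v ∈ e ∧ v ∈ f)

open scoped Classical in
/-- `m_{B,j}(q) = ∑_{M ∈ M_j(B)} q^{2j} ∏_{v ∈ B \ V(M)} (1 + q²(deg v - 1))`. -/
noncomputable def mBj {n : ℕ} (G : SimpleGraph (Fin n)) [DecidableRel G.Adj]
    (B : Finset (Fin n)) (j : ℕ) : Polynomial ℝ :=
  ∑ M ∈ bMatchings G B j,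
    X ^ (2 * j) *
      ∏ v ∈ B.filter (fun v => ¬∃ e ∈ M, v ∈ e),
        (1 + X ^ 2 * ((G.degree v : Polynomial ℝ) - 1))

/-! Only permutations `τ` moving every point along an edge of `T` inside `B` give a nonzero
product `∏ᵢ A i (τ i)`. In a forest such a `τ` is an involution: an orbit
`x → τ x → τ² x → ⋯ → x` of length at least three would be a walk from `τ x` back to `x`
avoiding the bridge `s(x, τ x)`. Hence these `τ` are the products of the transpositions along
the matchings `M ∈ M_j(B)`, with `χ_λ(τ) = χ_λ(j)`; each transposition contributes
`(-q)² = q²` and each vertex of `B` fixed by `τ` its diagonal entry `1 + q²(deg v - 1)`. -/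

namespace SimpleGraph

variable {V : Type*} {G : SimpleGraph V}

lemma exists_walk_iterate (f : V → V) (x : V) (hf : ∀ m, G.Adj (f^[m] x) (f^[m + 1] x))
    (t : ℕ) : ∃ w : G.Walk x (f^[t] x), ∀ e ∈ w.edges, ∃ m < t, e = s(f^[m] x, f^[m + 1] x) := by
  induction t with
  | zero => exact ⟨.nil, by simp⟩
  | succ t ih =>
    obtain ⟨w, hw⟩ := ih
    refine ⟨w.concat (hf t), fun e he => ?_⟩
    rw [Walk.edges_concat, List.concat_eq_append, List.mem_append, List.mem_singleton] at he
    rcases he with he | rfl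
    · obtain ⟨m, hm, rfl⟩ := hw e he
      exact ⟨m, by omega, rfl⟩
    · exact ⟨t, by omega, rfl⟩

open Function in
theorem IsAcyclic.involutive_of_forall_adj [Finite V] (hG : G.IsAcyclic) (τ : Equiv.Perm V)
    (hτ : ∀ x, τ x ≠ x → G.Adj x (τ x)) : Involutive τ := by
  intro x
  by_contra hx2
  have hx1 : τ x ≠ x := fun h => hx2 (by rw [h, h])
  have hadj : ∀ m, G.Adj (τ^[m] (τ x)) (τ^[m + 1] (τ x)) := fun m => by
    rw [iterate_succ_apply']
    refine hτ _ fun h => hx1 (τ.injective (τ.injective.iterate m ?_))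
    rwa [← iterate_succ_apply, iterate_succ_apply']
  set k := minimalPeriod τ x
  have hk : 0 < k := minimalPeriod_pos_of_mem_periodicPts (τ.injective.mem_periodicPts x)
  have hk_le : ∀ m, 0 < m → τ^[m] x = x → k ≤ m := fun _ hm h => IsPeriodicPt.minimalPeriod_le hm h
  obtain ⟨w, hw⟩ := exists_walk_iterate τ (τ x) hadj (k - 1)
  have hend : τ^[k - 1] (τ x) = x := by
    rw [← iterate_succ_apply, Nat.succ_eq_add_one, Nat.sub_add_cancel hk, iterate_minimalPeriod]
  have hbridge := isAcyclic_iff_forall_adj_isBridge.mp hG (hτ x hx1).symm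
  obtain ⟨m, hm, he⟩ := hw _ (Walk.edges_copy w rfl hend ▸
    isBridge_iff_forall_walk_mem_edges.mp hbridge (w.copy rfl hend))
  simp only [← iterate_succ_apply, Sym2.eq_iff] at he
  rcases he with ⟨h1, h2⟩ | ⟨h1, h2⟩
  · rw [iterate_succ_apply'] at h1
    obtain rfl | hm0 := Nat.eq_zero_or_pos m
    · exact hx2 h2.symm
    · have := hk_le m hm0 (τ.injective h1).symm
      omega
  · have := hk_le (m + 1) m.succ_pos h2.symm
    omega

end SimpleGraph

section matchingPerm

variable {V : Type*}

def PairwiseVertexDisjoint (M : Finset (Sym2 V)) : Prop :=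
  ∀ e ∈ M, ∀ f ∈ M, e ≠ f → ∀ v, ¬(v ∈ e ∧ v ∈ f)

lemma PairwiseVertexDisjoint.subset {M N : Finset (Sym2 V)} (hM : PairwiseVertexDisjoint M)
    (hNM : N ⊆ M) : PairwiseVertexDisjoint N :=
  fun e he f hf => hM e (hNM he) f (hNM hf)

variable [DecidableEq V]

def sym2Swap : Sym2 V → Equiv.Perm V :=
  Sym2.lift ⟨Equiv.swap, Equiv.swap_comm⟩

lemma sym2Swap_apply_of_notMem {e : Sym2 V} {x : V} (hx : x ∉ e) : sym2Swap e x = x := by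
  induction e using Sym2.ind with
  | _ a b =>
    rw [Sym2.mem_iff, not_or] at hx
    exact Equiv.swap_apply_of_ne_of_ne hx.1 hx.2

lemma PairwiseVertexDisjoint.commute {M : Finset (Sym2 V)} (hM : PairwiseVertexDisjoint M) :
    (M : Set (Sym2 V)).Pairwise fun e f => Commute (sym2Swap e) (sym2Swap f) := by
  intro e he f hf hef
  refine Equiv.Perm.Disjoint.commute fun x => ?_
  by_cases hx : x ∈ e
  · exact .inr (sym2Swap_apply_of_notMem fun hx' => hM e he f hf hef x ⟨hx, hx'⟩)
  · exact .inl (sym2Swap_apply_of_notMem hx)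

open scoped Classical in
noncomputable def matchingPerm (M : Finset (Sym2 V)) : Equiv.Perm V :=
  if h : PairwiseVertexDisjoint M then M.noncommProd sym2Swap h.commute else 1

lemma matchingPerm_insert {e : Sym2 V} {M : Finset (Sym2 V)} (he : e ∉ M)
    (hM : PairwiseVertexDisjoint (insert e M)) :
    matchingPerm (insert e M) = sym2Swap e * matchingPerm M := by
  rw [matchingPerm, matchingPerm, dif_pos hM, dif_pos (hM.subset (subset_insert e M)),
    noncommProd_insert_of_notMem _ _ _ _ he]

lemma matchingPerm_apply_of_forall_notMem {M : Finset (Sym2 V)} (hM : PairwiseVertexDisjoint M)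
    {x : V} (hx : ∀ e ∈ M, x ∉ e) : matchingPerm M x = x := by
  induction M using Finset.induction_on with
  | empty => simp [matchingPerm]
  | insert e M he ih =>
    rw [matchingPerm_insert he hM, Equiv.Perm.mul_apply,
      ih (hM.subset (subset_insert e M)) fun f hf => hx f (mem_insert_of_mem hf),
      sym2Swap_apply_of_notMem (hx e (mem_insert_self e M))]

lemma matchingPerm_apply_of_mk_mem {M : Finset (Sym2 V)} (hM : PairwiseVertexDisjoint M)
    {a b : V} (hab : s(a, b) ∈ M) : matchingPerm M a = b := by
  induction M using Finset.induction_on with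
  | empty => simp at hab
  | insert e M he ih =>
    have hM' := hM.subset (subset_insert e M)
    have hne : ∀ f ∈ M, e ≠ f := fun f hf hef => he (hef ▸ hf)
    rw [matchingPerm_insert he hM, Equiv.Perm.mul_apply]
    rcases mem_insert.1 hab with rfl | hab
    · rw [matchingPerm_apply_of_forall_notMem hM' fun f hf ha =>
        hM _ (mem_insert_self _ M) f (mem_insert_of_mem hf) (hne f hf) a
          ⟨Sym2.mem_mk_left a b, ha⟩]
      exact Equiv.swap_apply_left a b
    · rw [ih hM' hab]
      exact sym2Swap_apply_of_notMem fun hb => hM e (mem_insert_self e M) _ (mem_insert_of_mem hab)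
        (hne _ hab) b ⟨hb, Sym2.mem_mk_right a b⟩

lemma mk_mem_of_matchingPerm_apply_ne {M : Finset (Sym2 V)} (hM : PairwiseVertexDisjoint M)
    {x : V} (hx : matchingPerm M x ≠ x) : s(x, matchingPerm M x) ∈ M := by
  obtain ⟨e, he, hxe⟩ : ∃ e ∈ M, x ∈ e := by
    by_contra! h
    exact hx (matchingPerm_apply_of_forall_notMem hM h)
  obtain ⟨y, rfl⟩ := Sym2.mem_iff_exists.1 hxe
  rwa [matchingPerm_apply_of_mk_mem hM he]

end matchingPerm

namespace Equiv.Perm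

variable {V : Type*} [DecidableEq V] [Fintype V]

def swapPairs (τ : Perm V) : Finset (Sym2 V) := τ.support.image fun i => s(i, τ i)

@[simp]
lemma mem_swapPairs {τ : Perm V} {e : Sym2 V} :
    e ∈ τ.swapPairs ↔ ∃ i, τ i ≠ i ∧ s(i, τ i) = e := by
  simp [swapPairs]

lemma mk_mem_swapPairs {τ : Perm V} {i : V} (hi : τ i ≠ i) : s(i, τ i) ∈ τ.swapPairs :=
  mem_swapPairs.2 ⟨i, hi, rfl⟩

variable {τ : Perm V}

lemma eq_mk_of_mem_swapPairs (hτ : Function.Involutive τ) {e : Sym2 V} (he : e ∈ τ.swapPairs)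
    {v : V} (hv : v ∈ e) : τ v ≠ v ∧ e = s(v, τ v) := by
  obtain ⟨i, hi, rfl⟩ := mem_swapPairs.1 he
  rcases Sym2.mem_iff.1 hv with rfl | rfl
  · exact ⟨hi, rfl⟩
  · rw [hτ]
    exact ⟨hi.symm, Sym2.eq_swap⟩

lemma exists_mem_swapPairs_iff (hτ : Function.Involutive τ) {v : V} :
    (∃ e ∈ τ.swapPairs, v ∈ e) ↔ τ v ≠ v :=
  ⟨fun ⟨_, he, hv⟩ => (eq_mk_of_mem_swapPairs hτ he hv).1,
    fun hv => ⟨_, mk_mem_swapPairs hv, Sym2.mem_mk_left _ _⟩⟩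

lemma pairwiseVertexDisjoint_swapPairs (hτ : Function.Involutive τ) :
    PairwiseVertexDisjoint τ.swapPairs :=
  fun _ he _ hf hef _ ⟨hve, hvf⟩ =>
    hef ((eq_mk_of_mem_swapPairs hτ he hve).2.trans (eq_mk_of_mem_swapPairs hτ hf hvf).2.symm)

lemma card_support_eq_two_mul_card_swapPairs (hτ : Function.Involutive τ) :
    #τ.support = 2 * #τ.swapPairs := by
  have hsupp : τ.support = τ.swapPairs.biUnion Sym2.toFinset := by
    ext v
    simp only [mem_biUnion, Sym2.mem_toFinset, mem_support, exists_mem_swapPairs_iff hτ]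
  rw [hsupp, card_biUnion, sum_const_nat, mul_comm]
  · intro e he
    obtain ⟨i, hi, rfl⟩ := mem_swapPairs.1 he
    exact Sym2.card_toFinset_of_not_isDiag _ (by simpa using Ne.symm hi)
  · intro e he f hf hef
    exact disjoint_left.2 fun v hve hvf =>
      pairwiseVertexDisjoint_swapPairs hτ e he f hf hef v
        ⟨Sym2.mem_toFinset.1 hve, Sym2.mem_toFinset.1 hvf⟩

lemma cycleType_eq_replicate_card_swapPairs (hτ : Function.Involutive τ) :
    τ.cycleType = Multiset.replicate #τ.swapPairs 2 := by
  have hsq : τ ^ 2 = 1 := by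
    ext x
    simp [sq, hτ x]
  have htwo : ∀ a ∈ τ.cycleType, a = 2 := fun a ha =>
    le_antisymm
      (Nat.le_of_dvd two_pos ((dvd_of_mem_cycleType ha).trans (orderOf_dvd_of_pow_eq_one hsq)))
      (two_le_of_mem_cycleType ha)
  have hrep := Multiset.eq_replicate_card.2 htwo
  have hsum := τ.sum_cycleType
  rw [hrep, Multiset.sum_replicate, smul_eq_mul, card_support_eq_two_mul_card_swapPairs hτ] at hsum
  rw [hrep]
  congr 1
  omega

lemma matchingPerm_swapPairs (hτ : Function.Involutive τ) : matchingPerm τ.swapPairs = τ := by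
  ext x
  by_cases hx : τ x = x
  · rw [hx]
    exact matchingPerm_apply_of_forall_notMem (pairwiseVertexDisjoint_swapPairs hτ) fun e he hxe =>
      (eq_mk_of_mem_swapPairs hτ he hxe).1 hx
  · exact matchingPerm_apply_of_mk_mem (pairwiseVertexDisjoint_swapPairs hτ) (mk_mem_swapPairs hx)

lemma swapPairs_matchingPerm {M : Finset (Sym2 V)} (hM : PairwiseVertexDisjoint M)
    (hdiag : ∀ e ∈ M, ¬e.IsDiag) : (matchingPerm M).swapPairs = M := by
  ext e
  induction e using Sym2.ind with
  | _ a b =>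
    refine ⟨fun h => ?_, fun hab => ?_⟩
    · obtain ⟨i, hi, hie⟩ := mem_swapPairs.1 h
      exact hie ▸ mk_mem_of_matchingPerm_apply_ne hM hi
    · have hb := matchingPerm_apply_of_mk_mem hM hab
      refine hb ▸ mk_mem_swapPairs ?_
      rw [hb]
      exact fun hba => hdiag _ hab (Sym2.mk_isDiag_iff.2 hba.symm)

end Equiv.Perm

section MovesAlongEdges

variable {V : Type*} (G : SimpleGraph V) (B : Finset V)

def MovesAlongEdges (τ : Equiv.Perm V) : Prop :=
  ∀ i, τ i ≠ i → i ∈ B ∧ τ i ∈ B ∧ G.Adj i (τ i)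

variable {G B} [Fintype V] [DecidableEq V] {τ : Equiv.Perm V}

lemma card_swapPairs_le (hτ : MovesAlongEdges G B τ) (hinv : Function.Involutive τ) :
    #τ.swapPairs ≤ #B / 2 := by
  rw [Nat.le_div_iff_mul_le two_pos, mul_comm, ← τ.card_support_eq_two_mul_card_swapPairs hinv]
  exact card_le_card fun i hi => (hτ i (Equiv.Perm.mem_support.1 hi)).1

end MovesAlongEdges

section blockQLap

variable {n : ℕ} (G : SimpleGraph (Fin n)) [DecidableRel G.Adj] (B : Finset (Fin n))

noncomputable def blockQLap {R : Type*} [CommRing R] (q : R) : Matrix (Fin n) (Fin n) R :=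
  Matrix.of fun i j => if i ∈ B ∧ j ∈ B then qLap G q i j else if i = j then 1 else 0

variable {G B} {R : Type*} [CommRing R] (q : R) {τ : Equiv.Perm (Fin n)}

lemma prod_blockQLap_eq_zero (hτ : ¬MovesAlongEdges G B τ) :
    ∏ i, blockQLap G B q i (τ i) = 0 := by
  obtain ⟨i, hi, hbad⟩ : ∃ i, τ i ≠ i ∧ ¬(i ∈ B ∧ τ i ∈ B ∧ G.Adj i (τ i)) := by
    simpa [MovesAlongEdges] using hτ
  refine prod_eq_zero (mem_univ i) ?_
  by_cases hB : i ∈ B ∧ τ i ∈ B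
  · have hnadj : ¬G.Adj i (τ i) := fun h => hbad ⟨hB.1, hB.2, h⟩
    simp [blockQLap, qLap, hB, hi.symm, hnadj]
  · simp [blockQLap, hB, hi.symm]

lemma prod_blockQLap_of_involutive (hτ : MovesAlongEdges G B τ) (hinv : Function.Involutive τ) :
    ∏ i, blockQLap G B q i (τ i) =
      q ^ (2 * #τ.swapPairs) * ∏ v ∈ B with τ v = v, (1 + q ^ 2 * ((G.degree v : R) - 1)) := by
  have hmoved : ∏ i ∈ univ with ¬τ i = i, blockQLap G B q i (τ i) = q ^ (2 * #τ.swapPairs) := by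
    rw [prod_congr (s₂ := τ.support) (g := fun _ => -q) (by ext; simp) fun i hi => by
        obtain ⟨hiB, hτiB, hadj⟩ := hτ i (mem_filter.1 hi).2
        simp [blockQLap, qLap, hiB, hτiB, hadj, (mem_filter.1 hi).2.symm],
      prod_const, Equiv.Perm.card_support_eq_two_mul_card_swapPairs hinv,
      (even_two_mul _).neg_pow]
  have hfixed : ∏ i ∈ univ with τ i = i, blockQLap G B q i (τ i) =
      ∏ v ∈ B with τ v = v, (1 + q ^ 2 * ((G.degree v : R) - 1)) := by
    have hdiag : ∀ i, blockQLap G B q i i =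
        if i ∈ B then 1 + q ^ 2 * ((G.degree i : R) - 1) else 1 := fun i => by
      by_cases hi : i ∈ B <;> simp [blockQLap, qLap, hi]
    rw [prod_congr rfl fun i hi => by rw [(mem_filter.1 hi).2, hdiag], ← prod_filter,
      filter_filter]
    exact prod_congr (by ext; simp [and_comm]) fun _ _ => rfl
  rw [← prod_filter_mul_prod_filter_not univ (fun i => τ i = i), hfixed, hmoved, mul_comm]

end blockQLap

section bMatchings

variable {n : ℕ} {G : SimpleGraph (Fin n)} [DecidableRel G.Adj] {B : Finset (Fin n)}

lemma mem_bMatchings {M : Finset (Sym2 (Fin n))} {j : ℕ} :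
    M ∈ bMatchings G B j ↔
      M ⊆ G.edgeFinset ∧ #M = j ∧ (∀ e ∈ M, ∀ v ∈ e, v ∈ B) ∧ PairwiseVertexDisjoint M := by
  simp only [bMatchings, mem_filter, mem_powerset, PairwiseVertexDisjoint]

lemma swapPairs_mem_bMatchings {τ : Equiv.Perm (Fin n)} (hτ : MovesAlongEdges G B τ)
    (hinv : Function.Involutive τ) : τ.swapPairs ∈ bMatchings G B #τ.swapPairs := by
  refine mem_bMatchings.2 ⟨fun e he => ?_, rfl, fun e he v hv => ?_,
    τ.pairwiseVertexDisjoint_swapPairs hinv⟩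
  · obtain ⟨i, hi, rfl⟩ := Equiv.Perm.mem_swapPairs.1 he
    exact G.mem_edgeFinset.2 (hτ i hi).2.2
  · exact (hτ v (τ.eq_mk_of_mem_swapPairs hinv he hv).1).1

variable {M : Finset (Sym2 (Fin n))} {j : ℕ}

lemma movesAlongEdges_matchingPerm (hM : M ∈ bMatchings G B j) :
    MovesAlongEdges G B (matchingPerm M) := by
  obtain ⟨hsub, -, hB, hdisj⟩ := mem_bMatchings.1 hM
  intro i hi
  have he := mk_mem_of_matchingPerm_apply_ne hdisj hi
  exact ⟨hB _ he i (Sym2.mem_mk_left _ _), hB _ he _ (Sym2.mem_mk_right _ _),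
    G.mem_edgeFinset.1 (hsub he)⟩

lemma swapPairs_matchingPerm_of_mem_bMatchings (hM : M ∈ bMatchings G B j) :
    (matchingPerm M).swapPairs = M := by
  obtain ⟨hsub, -, -, hdisj⟩ := mem_bMatchings.1 hM
  exact Equiv.Perm.swapPairs_matchingPerm hdisj fun e he =>
    G.not_isDiag_of_mem_edgeSet (G.mem_edgeFinset.1 (hsub he))

end bMatchings

lemma chiPart_eq_of_cycleType_eq {n : ℕ} (lam : Fin n → ℕ) {τ τ' : Equiv.Perm (Fin n)}
    (h : τ.cycleType = τ'.cycleType) : chiPart n lam τ = chiPart n lam τ' := by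
  simp only [chiPart, h]

open scoped Classical in
theorem imman_blockDiag_qLap_general {n : ℕ} (G : SimpleGraph (Fin n)) [DecidableRel G.Adj]
    (hG : G.IsTree) (lam : Fin n → ℕ)
    (B : Finset (Fin n))
    (σ : ℕ → Equiv.Perm (Fin n))
    (hσ : ∀ j ≤ B.card / 2, (σ j).cycleType = Multiset.replicate j 2) :
    imman (fun τ => ((chiPart n lam τ : ℤ) : Polynomial ℝ))
        (Matrix.of fun i j =>
          if i ∈ B ∧ j ∈ B then qLap G (X : Polynomial ℝ) i j
          else if i = j then 1 else 0)
      = ∑ j ∈ Finset.range (B.card / 2 + 1),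
          ((chiPart n lam (σ j) : ℤ) : Polynomial ℝ) * mBj G B j := by
  classical
  have hinv (τ : Equiv.Perm (Fin n)) (hτ : MovesAlongEdges G B τ) : Function.Involutive τ :=
    hG.isAcyclic.involutive_of_forall_adj τ fun i hi => (hτ i hi).2.2
  change imman _ (blockQLap G B X) = _
  rw [imman, ← sum_filter_of_ne fun τ _ hτ => by_contra fun h =>
    hτ (by rw [prod_blockQLap_eq_zero X h, mul_zero])]
  simp_rw [mBj, mul_sum]
  rw [sum_sigma']
  refine sum_bij' (fun τ _ => ⟨#τ.swapPairs, τ.swapPairs⟩) (fun p _ => matchingPerm p.2)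
    (fun τ hτ => ?_) (fun p hp => ?_) (fun τ hτ => ?_) (fun p hp => ?_) (fun τ hτ => ?_)
  · have hτ' := (mem_filter.1 hτ).2
    exact mem_sigma.2 ⟨mem_range_succ_iff.2 (card_swapPairs_le hτ' (hinv τ hτ')),
      swapPairs_mem_bMatchings hτ' (hinv τ hτ')⟩
  · exact mem_filter.2 ⟨mem_univ _, movesAlongEdges_matchingPerm (mem_sigma.1 hp).2⟩
  · exact Equiv.Perm.matchingPerm_swapPairs (hinv τ (mem_filter.1 hτ).2)
  · obtain ⟨j, M⟩ := p
    have hM := (mem_sigma.1 hp).2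
    rw [swapPairs_matchingPerm_of_mem_bMatchings hM, (mem_bMatchings.1 hM).2.1]
  · have hτ' := (mem_filter.1 hτ).2
    have hcycle := (τ.cycleType_eq_replicate_card_swapPairs (hinv τ hτ')).trans
      (hσ _ (card_swapPairs_le hτ' (hinv τ hτ'))).symm
    rw [prod_blockQLap_of_involutive X hτ' (hinv τ hτ'), chiPart_eq_of_cycleType_eq lam hcycle]
    congr 3 with v
    simp only [mem_filter, τ.exists_mem_swapPairs_iff (hinv τ hτ'), not_not]

open scoped Classical in
/-- For a tree `T` on `[n]` and `B ⊆ [n]`, the immanant of the block-diagonal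
matrix `diag(L^q_T[B|B], I)` (equal to `L^q_T` on `B × B`, the identity
outside) equals `∑_{j=0}^{⌊|B|/2⌋} χ_λ(2^j 1^{n-2j}) m_{B,j}(q)`.  Here `σ j`
is any permutation of cycle type `2^j 1^{n-2j}`. -/
theorem imman_blockDiag_qLap {n : ℕ} (G : SimpleGraph (Fin n)) [DecidableRel G.Adj]
    (hG : G.IsTree) (lam : Fin n → ℕ) (hlam : Antitone lam) (hsum : ∑ i, lam i = n)
    (B : Finset (Fin n))
    (σ : ℕ → Equiv.Perm (Fin n))
    (hσ : ∀ j ≤ B.card / 2, (σ j).cycleType = Multiset.replicate j 2) :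
    imman (fun τ => ((chiPart n lam τ : ℤ) : Polynomial ℝ))
        (Matrix.of fun i j =>
          if i ∈ B ∧ j ∈ B then qLap G (X : Polynomial ℝ) i j
          else if i = j then 1 else 0)
      = ∑ j ∈ Finset.range (B.card / 2 + 1),
          ((chiPart n lam (σ j) : ℤ) : Polynomial ℝ) * mBj G B j :=
  imman_blockDiag_qLap_general G hG lam B σ hσ
end
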